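/- arXiv:2208.06736 — 7 statements merged into one kernel-verified Lean document; each statement's English description precedes it below -/
import Mathlib

section
/- Let a ≥ 2 and 0 < b < c < ∞. Then for every v ∈ C^1([0,c]) and every smooth decreasing cutoff φ : [0,∞) → [0,1] with φ = 1 on [0,b] and φ = 0 on [c,∞), ∫_0^b z^a |φ(z)v(z)|² dz ≤ C(c) ∫_0^c z^a |(φv)'(z)|² dz, where C(c) depends only on c; consequently ∫_0^b z^a |v(z)|² dz ≲_{a,b,c} ∫_0^c z^a |v'(z)|² dz + ∫_b^c z^a |v(z)|² dz. -/
open Real Set intervalIntegral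
open MeasureTheory


lemma cs_interval {f g : ℝ → ℝ} {z y : ℝ} (hzy : z ≤ y)
    (hf : ContinuousOn f (Icc z y)) (hg : ContinuousOn g (Icc z y)) :
    (∫ t in z..y, f t * g t) ^ 2 ≤ (∫ t in z..y, f t ^ 2) * (∫ t in z..y, g t ^ 2) := by
  have hu : uIcc z y = Icc z y := uIcc_of_le hzy
  have hf' : ContinuousOn f (uIcc z y) := hu ▸ hf
  have hg' : ContinuousOn g (uIcc z y) := hu ▸ hg
  have hif2 : IntervalIntegrable (fun t => f t ^ 2) volume z y :=
    (hf'.pow 2).intervalIntegrable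
  have hig2 : IntervalIntegrable (fun t => g t ^ 2) volume z y :=
    (hg'.pow 2).intervalIntegrable
  have hifg : IntervalIntegrable (fun t => f t * g t) volume z y :=
    (hf'.mul hg').intervalIntegrable
  set A := ∫ t in z..y, f t ^ 2 with hA
  set B := ∫ t in z..y, f t * g t with hB
  set Cq := ∫ t in z..y, g t ^ 2 with hC
  have key : ∀ x : ℝ, 0 ≤ A * (x * x) + (2 * B) * x + Cq := by
    intro x
    have h1 : A * (x * x) + (2 * B) * x + Cq
        = ∫ t in z..y, (x * f t + g t) ^ 2 := by
      have : (fun t => (x * f t + g t) ^ 2)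
          = fun t => (x * x) * f t ^ 2 + (2 * x) * (f t * g t) + g t ^ 2 := by
        funext t; ring
      rw [this, intervalIntegral.integral_add (((hif2.const_mul _).add
        (hifg.const_mul _))) hig2,
        intervalIntegral.integral_add (hif2.const_mul _) (hifg.const_mul _),
        intervalIntegral.integral_const_mul, intervalIntegral.integral_const_mul]
      ring
    rw [h1]
    exact intervalIntegral.integral_nonneg hzy (fun t _ => sq_nonneg _)
  have hd := discrim_le_zero key
  rw [discrim] at hd
  nlinarith [hd]

lemma rpow_contOn {a lo hi : ℝ} (ha : 0 < a) :
    ContinuousOn (fun t : ℝ => t ^ a) (Icc lo hi) := fun t _ =>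
  (Real.continuousAt_rpow_const t a (Or.inr ha.le)).continuousWithinAt

lemma key_bound (a c : ℝ) (ha : 2 ≤ a) (w w' : ℝ → ℝ)
    (hw : ∀ t ∈ Icc 0 c, HasDerivWithinAt w (w' t) (Icc 0 c) t)
    (hw' : ContinuousOn w' (Icc 0 c))
    {z y : ℝ} (hz : 0 < z) (hzy : z ≤ y) (hyc : y ≤ c) :
    (w y - w z) ^ 2 ≤ z ^ (1 - a) * ∫ t in (0:ℝ)..c, t ^ a * (w' t) ^ 2 := by
  have hzc : z ≤ c := hzy.trans hyc
  have h0c : (0:ℝ) ≤ c := hz.le.trans hzc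
  have hsub : Icc z y ⊆ Icc 0 c := Icc_subset_Icc hz.le hyc
  have hwc : ContinuousOn w (Icc 0 c) := fun t ht => (hw t ht).continuousWithinAt
  have hw'zy : ContinuousOn w' (Icc z y) := hw'.mono hsub
  -- integrability of the weighted square on [0,c]
  have hcont : ContinuousOn (fun t => t ^ a * (w' t) ^ 2) (Icc 0 c) :=
    (rpow_contOn (by linarith)).mul (hw'.pow 2)
  have hnn : ∀ t ∈ Icc (0:ℝ) c, 0 ≤ t ^ a * (w' t) ^ 2 := fun t ht =>
    mul_nonneg (Real.rpow_nonneg ht.1 a) (sq_nonneg _)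
  -- FTC
  have hftc : ∫ t in z..y, w' t = w y - w z := by
    apply intervalIntegral.integral_eq_sub_of_hasDeriv_right_of_le hzy
      (hwc.mono hsub)
    · intro x hx
      have hx' : x ∈ Icc 0 c := ⟨by linarith [hx.1], by linarith [hx.2]⟩
      exact ((hw x hx').hasDerivAt (Icc_mem_nhds (by linarith [hx.1])
        (by linarith [hx.2]))).hasDerivWithinAt
    · exact (hw'zy.mono (by rw [uIcc_of_le hzy])).intervalIntegrable
  -- |w y - w z| ≤ ∫ |w'|
  have habs : |w y - w z| ≤ ∫ t in z..y, |w' t| := by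
    rw [← hftc]; exact intervalIntegral.abs_integral_le_integral_abs hzy
  -- rewrite |w'| as product
  have hprod : ∀ t ∈ Icc z y,
      |w' t| = (t ^ (-(a/2))) * (t ^ (a/2) * |w' t|) := by
    intro t ht
    have ht0 : 0 < t := lt_of_lt_of_le hz ht.1
    rw [← mul_assoc, ← Real.rpow_add ht0]
    norm_num
  have hCS : (∫ t in z..y, |w' t|) ^ 2 ≤
      (∫ t in z..y, t ^ (-a)) * ∫ t in z..y, t ^ a * (w' t) ^ 2 := by
    have hint_eq : ∫ t in z..y, |w' t|
        = ∫ t in z..y, (t ^ (-(a/2))) * (t ^ (a/2) * |w' t|) := by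
      apply intervalIntegral.integral_congr
      rw [uIcc_of_le hzy]; exact hprod
    have hcf : ContinuousOn (fun t : ℝ => t ^ (-(a/2))) (Icc z y) := fun t ht =>
      (Real.continuousAt_rpow_const t _ (Or.inl (ne_of_gt (lt_of_lt_of_le hz ht.1)))).continuousWithinAt
    have hcg : ContinuousOn (fun t : ℝ => t ^ (a/2) * |w' t|) (Icc z y) :=
      ((rpow_contOn (by linarith)).mono (subset_refl _)).mul hw'zy.abs
    have h := cs_interval hzy hcf hcg
    rw [← hint_eq] at h
    refine h.trans (le_of_eq ?_)
    congr 1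
    · apply intervalIntegral.integral_congr
      rw [uIcc_of_le hzy]
      intro t ht
      have ht0 : 0 < t := lt_of_lt_of_le hz ht.1
      show (t ^ (-(a/2))) ^ 2 = t ^ (-a)
      rw [← Real.rpow_natCast (t ^ (-(a/2))) 2, ← Real.rpow_mul ht0.le]
      norm_num
    · apply intervalIntegral.integral_congr
      rw [uIcc_of_le hzy]
      intro t ht
      have ht0 : 0 < t := lt_of_lt_of_le hz ht.1
      show (t ^ (a/2) * |w' t|) ^ 2 = t ^ a * (w' t) ^ 2
      rw [mul_pow, sq_abs, ← Real.rpow_natCast (t ^ (a/2)) 2, ← Real.rpow_mul ht0.le]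
      norm_num
  -- bound ∫ t^(-a)
  have hIw : (∫ t in z..y, t ^ (-a)) ≤ z ^ (1 - a) := by
    rw [integral_rpow (Or.inr ⟨by intro h; rw [neg_eq_iff_eq_neg] at h; linarith,
      by rw [uIcc_of_le hzy]; intro h; exact absurd h.1 (not_le.mpr hz)⟩)]
    have hy1a : (0:ℝ) ≤ y ^ (-a + 1) := Real.rpow_nonneg (by linarith) _
    have hz1a : (0:ℝ) ≤ z ^ (-a + 1) := Real.rpow_nonneg hz.le _
    have hle : y ^ (-a + 1) ≤ z ^ (-a+1) :=
      Real.rpow_le_rpow_of_nonpos hz hzy (by linarith)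
    rw [div_le_iff_of_neg (by linarith : -a + 1 < 0)]
    have : z ^ (1-a) = z ^ (-a+1) := by ring_nf
    rw [this]
    nlinarith
  -- bound tail integral by full integral
  have hmono : (∫ t in z..y, t ^ a * (w' t) ^ 2) ≤ ∫ t in (0:ℝ)..c, t ^ a * (w' t) ^ 2 := by
    have i1 : IntervalIntegrable (fun t => t ^ a * (w' t) ^ 2) volume 0 z :=
      ((hcont.mono (Icc_subset_Icc le_rfl hzc)).mono (by rw [uIcc_of_le hz.le])).intervalIntegrable
    have i2 : IntervalIntegrable (fun t => t ^ a * (w' t) ^ 2) volume z y :=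
      ((hcont.mono hsub).mono (by rw [uIcc_of_le hzy])).intervalIntegrable
    have i3 : IntervalIntegrable (fun t => t ^ a * (w' t) ^ 2) volume y c :=
      ((hcont.mono (Icc_subset_Icc (by linarith : (0:ℝ) ≤ y) le_rfl)).mono (by rw [uIcc_of_le hyc])).intervalIntegrable
    have e1 : (∫ t in (0:ℝ)..c, t ^ a * (w' t) ^ 2)
        = (∫ t in (0:ℝ)..z, t ^ a * (w' t) ^ 2) + (∫ t in z..y, t ^ a * (w' t) ^ 2)
          + ∫ t in y..c, t ^ a * (w' t) ^ 2 := by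
      rw [intervalIntegral.integral_add_adjacent_intervals i1 i2,
        intervalIntegral.integral_add_adjacent_intervals (i1.trans i2) i3]
    have n1 : 0 ≤ ∫ t in (0:ℝ)..z, t ^ a * (w' t) ^ 2 :=
      intervalIntegral.integral_nonneg hz.le (fun t ht => hnn t ⟨ht.1, ht.2.trans hzc⟩)
    have n3 : 0 ≤ ∫ t in y..c, t ^ a * (w' t) ^ 2 :=
      intervalIntegral.integral_nonneg hyc (fun t ht => hnn t ⟨(hz.le.trans (hzy.trans ht.1)), ht.2⟩)
    linarith
  -- combine
  have hJnn : 0 ≤ ∫ t in z..y, t ^ a * (w' t) ^ 2 :=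
    intervalIntegral.integral_nonneg hzy (fun t ht => hnn t (hsub ht))
  have h1 : (w y - w z) ^ 2 ≤ (∫ t in z..y, |w' t|) ^ 2 := by
    rw [← sq_abs (w y - w z)]
    have hnn2 : 0 ≤ ∫ t in z..y, |w' t| := (abs_nonneg _).trans habs
    exact pow_le_pow_left₀ (abs_nonneg _) habs 2
  refine h1.trans (hCS.trans ?_)
  calc (∫ t in z..y, t ^ (-a)) * ∫ t in z..y, t ^ a * (w' t) ^ 2
      ≤ z ^ (1-a) * ∫ t in z..y, t ^ a * (w' t) ^ 2 :=
        mul_le_mul_of_nonneg_right hIw hJnn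
    _ ≤ z ^ (1-a) * ∫ t in (0:ℝ)..c, t ^ a * (w' t) ^ 2 :=
        mul_le_mul_of_nonneg_left hmono (Real.rpow_nonneg hz.le _)
theorem weighted_hardy_cutoff
    (a b c : ℝ) (ha : 2 ≤ a) (hb : 0 < b) (hbc : b < c) :
    ∃ C C' : ℝ,
      ∀ (v v' φ φ' : ℝ → ℝ),
        (∀ z ∈ Icc 0 c, HasDerivWithinAt v (v' z) (Icc 0 c) z) →
        ContinuousOn v' (Icc 0 c) →
        ContDiff ℝ (⊤ : ℕ∞) φ →
        (∀ z, HasDerivAt φ (φ' z) z) →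
        (∀ z, 0 ≤ z → φ z ∈ Icc (0:ℝ) 1) →
        AntitoneOn φ (Ici 0) →
        (∀ z ∈ Icc 0 b, φ z = 1) →
        (∀ z ∈ Ici c, φ z = 0) →
        (∫ z in (0:ℝ)..b, z ^ a * |φ z * v z| ^ 2 ≤
            C * ∫ z in (0:ℝ)..c, z ^ a * |φ' z * v z + φ z * v' z| ^ 2) ∧
        (∫ z in (0:ℝ)..b, z ^ a * |v z| ^ 2 ≤
            C' * ((∫ z in (0:ℝ)..c, z ^ a * |v' z| ^ 2) +
              ∫ z in b..c, z ^ a * |v z| ^ 2)) := by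
  refine ⟨b ^ 2, 2 * b / (c - b) + 2 * b ^ 2,
    fun v v' φ φ' hv hv' hφs hφd hφ01 hφanti hφ1 hφ0 => ?_⟩
  have hc : (0:ℝ) < c := hb.trans hbc
  have hcb : (0:ℝ) < c - b := by linarith
  have ha0 : (0:ℝ) < a := by linarith
  have hvc : ContinuousOn v (Icc 0 c) := fun t ht => (hv t ht).continuousWithinAt
  have hφc : Continuous φ := hφs.continuous
  have hφ'eq : φ' = deriv φ := funext fun z => ((hφd z).deriv).symm
  have hφ'cont : Continuous φ' := by
    rw [hφ'eq]; exact hφs.continuous_deriv (by simp)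
  have hφcz : φ c = 0 := hφ0 c self_mem_Ici
  simp only [sq_abs]
  constructor
  · -- Part 1
    set w' : ℝ → ℝ := fun t => φ' t * v t + φ t * v' t with hw'def
    set J1 := ∫ t in (0:ℝ)..c, t ^ a * (w' t) ^ 2 with hJ1
    have hw : ∀ t ∈ Icc (0:ℝ) c,
        HasDerivWithinAt (fun s => φ s * v s) (w' t) (Icc 0 c) t :=
      fun t ht => ((hφd t).hasDerivWithinAt).mul (hv t ht)
    have hw'cont : ContinuousOn w' (Icc 0 c) :=
      ((hφ'cont.continuousOn).mul hvc).add ((hφc.continuousOn).mul hv')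
    have hJ1nn : 0 ≤ J1 :=
      intervalIntegral.integral_nonneg hc.le
        (fun t ht => mul_nonneg (Real.rpow_nonneg ht.1 _) (sq_nonneg _))
    have hpt : ∀ z ∈ Icc (0:ℝ) b, z ^ a * (φ z * v z) ^ 2 ≤ b * J1 := by
      intro z hz
      rcases eq_or_lt_of_le hz.1 with h0 | h0
      · rw [← h0, Real.zero_rpow (ne_of_gt ha0), zero_mul]
        exact mul_nonneg hb.le hJ1nn
      · have hk := key_bound a c ha (fun s => φ s * v s) w' hw hw'cont h0
          (hz.2.trans hbc.le) le_rfl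
        have hwc0 : ((fun s => φ s * v s) c - (fun s => φ s * v s) z) ^ 2
            = (φ z * v z) ^ 2 := by simp [hφcz]
        rw [hwc0] at hk
        have h2 : z ^ a * (φ z * v z) ^ 2 ≤ z ^ a * (z ^ (1 - a) * J1) :=
          mul_le_mul_of_nonneg_left hk (Real.rpow_nonneg h0.le _)
        have h3 : z ^ a * (z ^ (1 - a) * J1) = z * J1 := by
          rw [← mul_assoc, ← Real.rpow_add h0]
          norm_num
        rw [h3] at h2
        exact h2.trans (mul_le_mul_of_nonneg_right hz.2 hJ1nn)
    have hint : IntervalIntegrable (fun z => z ^ a * (φ z * v z) ^ 2) volume 0 b := by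
      apply ContinuousOn.intervalIntegrable
      rw [uIcc_of_le hb.le]
      exact (rpow_contOn ha0).mul (((hφc.continuousOn).mul
        (hvc.mono (Icc_subset_Icc le_rfl (by linarith)))).pow 2)
    have := intervalIntegral.integral_mono_on hb.le hint intervalIntegrable_const hpt
    rw [intervalIntegral.integral_const, smul_eq_mul] at this
    calc ∫ z in (0:ℝ)..b, z ^ a * (φ z * v z) ^ 2 ≤ (b - 0) * (b * J1) := this
      _ = b ^ 2 * J1 := by ring
  · -- Part 2
    set J := ∫ t in (0:ℝ)..c, t ^ a * (v' t) ^ 2 with hJ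
    set A := ∫ z in b..c, z ^ a * (v z) ^ 2 with hAdef
    have hJnn : 0 ≤ J :=
      intervalIntegral.integral_nonneg hc.le
        (fun t ht => mul_nonneg (Real.rpow_nonneg ht.1 _) (sq_nonneg _))
    have hAnn : 0 ≤ A :=
      intervalIntegral.integral_nonneg hbc.le
        (fun t ht => mul_nonneg (Real.rpow_nonneg (hb.le.trans ht.1) _) (sq_nonneg _))
    have hpt : ∀ z ∈ Icc (0:ℝ) b,
        z ^ a * (v z) ^ 2 ≤ 2 / (c - b) * A + 2 * b * J := by
      intro z hz
      rcases eq_or_lt_of_le hz.1 with h0 | h0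
      · rw [← h0, Real.zero_rpow (ne_of_gt ha0), zero_mul]
        exact add_nonneg (mul_nonneg (by positivity) hAnn)
          (mul_nonneg (by positivity) hJnn)
      · have inner : ∀ y ∈ Icc b c,
            z ^ a * (v z) ^ 2 ≤ 2 * (y ^ a * (v y) ^ 2) + 2 * b * J := by
          intro y hy
          have hzy : z ≤ y := hz.2.trans hy.1
          have hk := key_bound a c ha v v' hv hv' h0 hzy hy.2
          have h1 : z ^ a * (v y - v z) ^ 2 ≤ b * J := by
            have h2 : z ^ a * (v y - v z) ^ 2 ≤ z ^ a * (z ^ (1 - a) * J) :=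
              mul_le_mul_of_nonneg_left hk (Real.rpow_nonneg h0.le _)
            have h3 : z ^ a * (z ^ (1 - a) * J) = z * J := by
              rw [← mul_assoc, ← Real.rpow_add h0]; norm_num
            rw [h3] at h2
            exact h2.trans (mul_le_mul_of_nonneg_right hz.2 hJnn)
          have h2 : z ^ a ≤ y ^ a := Real.rpow_le_rpow h0.le hzy ha0.le
          have h3 : (v z) ^ 2 ≤ 2 * (v y) ^ 2 + 2 * (v y - v z) ^ 2 := by nlinarith [sq_nonneg (v y + (v y - v z))]
          nlinarith [mul_le_mul_of_nonneg_left h3 (Real.rpow_nonneg h0.le a),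
            mul_le_mul_of_nonneg_right h2 (sq_nonneg (v y))]
        have hrint : IntervalIntegrable
            (fun y => 2 * (y ^ a * (v y) ^ 2) + 2 * b * J) volume b c := by
          apply ContinuousOn.intervalIntegrable
          rw [uIcc_of_le hbc.le]
          exact (continuousOn_const.mul ((rpow_contOn ha0).mul ((hvc.mono
            (Icc_subset_Icc hb.le le_rfl)).pow 2))).add continuousOn_const
        have h6 := intervalIntegral.integral_mono_on hbc.le
          intervalIntegrable_const hrint (fun y hy => inner y hy)
        rw [intervalIntegral.integral_const, smul_eq_mul] at h6
        have hint2 : IntervalIntegrable (fun y => y ^ a * (v y) ^ 2) volume b c := by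
          apply ContinuousOn.intervalIntegrable
          rw [uIcc_of_le hbc.le]
          exact (rpow_contOn ha0).mul ((hvc.mono (Icc_subset_Icc hb.le le_rfl)).pow 2)
        rw [intervalIntegral.integral_add (hint2.const_mul 2) intervalIntegrable_const,
          intervalIntegral.integral_const_mul, intervalIntegral.integral_const,
          smul_eq_mul] at h6
        have h7 : (c - b) * (z ^ a * (v z) ^ 2) ≤ 2 * A + 2 * b * J * (c - b) := by
          linarith
        have h8 : z ^ a * (v z) ^ 2 ≤ (2 * A + 2 * b * J * (c - b)) / (c - b) :=
          (le_div_iff₀ hcb).mpr (by linarith)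
        refine h8.trans (le_of_eq ?_)
        field_simp
        try ring
    have hint : IntervalIntegrable (fun z => z ^ a * (v z) ^ 2) volume 0 b := by
      apply ContinuousOn.intervalIntegrable
      rw [uIcc_of_le hb.le]
      exact (rpow_contOn ha0).mul ((hvc.mono (Icc_subset_Icc le_rfl (by linarith))).pow 2)
    have h9 := intervalIntegral.integral_mono_on hb.le hint intervalIntegrable_const hpt
    rw [intervalIntegral.integral_const, smul_eq_mul] at h9
    have hq : (0:ℝ) ≤ 2 * b / (c - b) := by positivity
    calc ∫ z in (0:ℝ)..b, z ^ a * (v z) ^ 2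
        ≤ (b - 0) * (2 / (c - b) * A + 2 * b * J) := h9
      _ = 2 * b / (c - b) * A + 2 * b ^ 2 * J := by field_simp; ring
      _ ≤ (2 * b / (c - b) + 2 * b ^ 2) * (J + A) := by nlinarith
end

section
/- Let a ≥ 2. There exists a constant C depending only on a such that for every v ∈ C^1([0,1]), ∫_0^1 z^a |v(z)|² dz ≤ C·(∫_0^1 z^a |v'(z)|² dz + |v(1)|²). -/
/-!
Since `(z ^ (a + 1) * v z ^ 2)' = (a + 1) z ^ a v ^ 2 + 2 z ^ (a + 1) v v'` and the bracket
vanishes at `0`, integrating over `[0, 1]` gives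
`(a + 1) ∫ z ^ a v ^ 2 = v 1 ^ 2 - 2 ∫ z ^ (a + 1) v v'`.
On `[0, 1]` we have `z ^ (a + 1) ≤ z ^ a`, so Young's inequality bounds the cross term by
`(a + 1) / 2 ∫ z ^ a v ^ 2 + 2 / (a + 1) ∫ z ^ a v' ^ 2`, and the first summand is absorbed
into the left side.
-/

open Real Set intervalIntegral

theorem intervalIntegrable_rpow_mul {p : ℝ} (hp : 0 ≤ p) {f : ℝ → ℝ}
    (hf : ContinuousOn f (Icc 0 1)) :
    IntervalIntegrable (fun z => z ^ p * f z) MeasureTheory.volume 0 1 :=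
  ((continuous_rpow_const hp).continuousOn.mul hf).intervalIntegrable_of_Icc zero_le_one

theorem integral_rpow_mul_sq_add_eq {a : ℝ} (ha : 0 ≤ a) {v v' : ℝ → ℝ}
    (hv : ∀ z ∈ Icc (0:ℝ) 1, HasDerivWithinAt v (v' z) (Icc 0 1) z)
    (hv' : ContinuousOn v' (Icc 0 1)) :
    (a + 1) * (∫ z in (0:ℝ)..1, z ^ a * v z ^ 2)
      + ∫ z in (0:ℝ)..1, z ^ (a + 1) * (2 * v z * v' z) = v 1 ^ 2 := by
  have ha1 : 0 < a + 1 := by linarith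
  have hvc : ContinuousOn v (Icc 0 1) := fun z hz => (hv z hz).continuousWithinAt
  have hI := intervalIntegrable_rpow_mul (f := fun z => v z ^ 2) ha (hvc.pow 2)
  have hK := intervalIntegrable_rpow_mul (f := fun z => 2 * v z * v' z) ha1.le
    ((continuousOn_const.mul hvc).mul hv')
  have hderiv : ∀ z ∈ Ioo (0:ℝ) 1, HasDerivAt (fun z => z ^ (a + 1) * v z ^ 2)
      ((a + 1) * (z ^ a * v z ^ 2) + z ^ (a + 1) * (2 * v z * v' z)) z := by
    rintro z ⟨hz0, hz1⟩
    have hpow : HasDerivAt (fun x : ℝ => x ^ (a + 1)) ((a + 1) * z ^ a) z := by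
      simpa using hasDerivAt_rpow_const (x := z) (p := a + 1) (Or.inl hz0.ne')
    have hsq : HasDerivAt (fun x => v x ^ 2) (2 * v z * v' z) z := by
      simpa using ((hv z ⟨hz0.le, hz1.le⟩).hasDerivAt (Icc_mem_nhds hz0 hz1)).fun_pow 2
    exact (hpow.fun_mul hsq).congr_deriv (by ring)
  have hF : ContinuousOn (fun z : ℝ => z ^ (a + 1) * v z ^ 2) (Icc 0 1) :=
    (continuous_rpow_const ha1.le).continuousOn.mul (hvc.pow 2)
  rw [← integral_const_mul, ← integral_add (hI.const_mul _) hK,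
    integral_eq_sub_of_hasDerivAt_of_le zero_le_one hF hderiv ((hI.const_mul _).add hK)]
  simp [zero_rpow ha1.ne']

theorem neg_two_mul_mul_mul_le_of_mem_Icc {z t : ℝ} (hz : z ∈ Icc (0:ℝ) 1) (ht : 0 < t)
    (x y : ℝ) : -(2 * z * x * y) ≤ t / 2 * x ^ 2 + 2 / t * y ^ 2 := by
  have hsplit : t / 2 * x ^ 2 + 2 / t * y ^ 2 + 2 * z * x * y
      = (t * x + 2 * z * y) ^ 2 / (2 * t) + 2 / t * ((1 - z) * (1 + z) * y ^ 2) := by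
    field_simp
    ring
  have hz' : 0 ≤ (1 - z) * (1 + z) := mul_nonneg (by linarith [hz.2]) (by linarith [hz.1])
  have : 0 ≤ t / 2 * x ^ 2 + 2 / t * y ^ 2 + 2 * z * x * y := by rw [hsplit]; positivity
  linarith

theorem integral_rpow_mul_sq_le {a : ℝ} (ha : 0 ≤ a) {v v' : ℝ → ℝ}
    (hv : ∀ z ∈ Icc (0:ℝ) 1, HasDerivWithinAt v (v' z) (Icc 0 1) z)
    (hv' : ContinuousOn v' (Icc 0 1)) :
    ∫ z in (0:ℝ)..1, z ^ a * v z ^ 2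
      ≤ 4 / (a + 1) * ((∫ z in (0:ℝ)..1, z ^ a * v' z ^ 2) + v 1 ^ 2) := by
  have ha1 : 0 < a + 1 := by linarith
  have hvc : ContinuousOn v (Icc 0 1) := fun z hz => (hv z hz).continuousWithinAt
  have hI := intervalIntegrable_rpow_mul (f := fun z => v z ^ 2) ha (hvc.pow 2)
  have hJ := intervalIntegrable_rpow_mul (f := fun z => v' z ^ 2) ha (hv'.pow 2)
  have hK := intervalIntegrable_rpow_mul (f := fun z => 2 * v z * v' z) ha1.le
    ((continuousOn_const.mul hvc).mul hv')
  have hcross : -∫ z in (0:ℝ)..1, z ^ (a + 1) * (2 * v z * v' z)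
      ≤ (a + 1) / 2 * (∫ z in (0:ℝ)..1, z ^ a * v z ^ 2)
        + 2 / (a + 1) * ∫ z in (0:ℝ)..1, z ^ a * v' z ^ 2 := by
    rw [← integral_neg, ← integral_const_mul, ← integral_const_mul,
      ← integral_add (hI.const_mul _) (hJ.const_mul _)]
    refine integral_mono_on zero_le_one hK.neg ((hI.const_mul _).add (hJ.const_mul _))
      fun z hz => ?_
    have hyoung := neg_two_mul_mul_mul_le_of_mem_Icc hz ha1 (v z) (v' z)
    calc -(z ^ (a + 1) * (2 * v z * v' z)) = z ^ a * -(2 * z * v z * v' z) := by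
          rw [rpow_add_one' hz.1 ha1.ne']; ring
      _ ≤ z ^ a * ((a + 1) / 2 * v z ^ 2 + 2 / (a + 1) * v' z ^ 2) := by
          exact mul_le_mul_of_nonneg_left hyoung (rpow_nonneg hz.1 a)
      _ = _ := by ring
  have hJ0 : 0 ≤ ∫ z in (0:ℝ)..1, z ^ a * v' z ^ 2 :=
    integral_nonneg zero_le_one fun z hz => mul_nonneg (rpow_nonneg hz.1 a) (sq_nonneg _)
  have hJle : 4 / (a + 1) * (∫ z in (0:ℝ)..1, z ^ a * v' z ^ 2)
      ≤ 4 * ∫ z in (0:ℝ)..1, z ^ a * v' z ^ 2 :=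
    mul_le_mul_of_nonneg_right (div_le_self (by norm_num) (by linarith)) hJ0
  have hid := integral_rpow_mul_sq_add_eq ha hv hv'
  rw [div_mul_eq_mul_div, le_div_iff₀ ha1]
  linear_combination 2 * hcross + 2 * hid + hJle + 2 * sq_nonneg (v 1)

theorem weighted_poincare_hardy_unit
    (a : ℝ) (ha : 2 ≤ a) :
    ∃ C : ℝ,
      ∀ (v v' : ℝ → ℝ),
        (∀ z ∈ Icc (0:ℝ) 1, HasDerivWithinAt v (v' z) (Icc (0:ℝ) 1) z) →
        ContinuousOn v' (Icc (0:ℝ) 1) →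
        ∫ z in (0:ℝ)..1, z ^ a * |v z| ^ 2 ≤
          C * ((∫ z in (0:ℝ)..1, z ^ a * |v' z| ^ 2) + |v 1| ^ 2) := by
  refine ⟨4 / (a + 1), fun v v' hv hv' => ?_⟩
  simpa only [sq_abs] using integral_rpow_mul_sq_le (by linarith) hv hv'
end

section
/- (Decay estimate, case γ ∈ (1,2)) Let d ≥ 3, γ ∈ (1,2), α = 1/(γ−1), and suppose w : [0,R) → (0,∞) is C^1, decreasing, with w(0) = w₀ > 0, and satisfies w'(r) = −4π((γ−1)/γ)·r^{−(d−1)} ∫_0^r y^{d−1} w(y)^α dy for r ∈ (0,R). If α ≠ 1, then for all r ∈ [0,R): w(r) ≤ (w₀^{−(α−1)} + (2π/d)·((2−γ)/γ)·r²)^{−1/(α−1)}. -/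
open Real Set intervalIntegral

set_option maxHeartbeats 1000000 in
theorem decay_estimate_polytropic
    (d : ℕ) (hd : 3 ≤ d) (γ : ℝ) (hγ1 : 1 < γ) (hγ2 : γ < 2)
    (α : ℝ) (hα : α = 1 / (γ - 1)) (hα1 : α ≠ 1)
    (R : ℝ) (hR : 0 < R) (w w' : ℝ → ℝ) (w₀ : ℝ) (hw₀ : w 0 = w₀) (hw₀pos : 0 < w₀)
    (hpos : ∀ r ∈ Ico 0 R, 0 < w r)
    (hmono : AntitoneOn w (Ico 0 R))
    (hderiv : ∀ r ∈ Ico 0 R, HasDerivWithinAt w (w' r) (Ico 0 R) r)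
    (heq : ∀ r ∈ Ioo 0 R,
      w' r = -(4 * π) * ((γ - 1) / γ) * r ^ (-((d : ℝ) - 1)) *
        ∫ y in (0:ℝ)..r, y ^ (d - 1) * w y ^ α) :
    ∀ r ∈ Ico 0 R,
      w r ≤ (w₀ ^ (-(α - 1)) + (2 * π / d) * ((2 - γ) / γ) * r ^ 2) ^ (-(1 / (α - 1))) := by
  have hγ0 : (0:ℝ) < γ - 1 := by linarith
  have hγpos : (0:ℝ) < γ := by linarith
  have hαgt : 1 < α := by
    rw [hα, lt_div_iff₀ hγ0]; linarith
  have hα0 : (0:ℝ) < α := by linarith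
  have hαm1 : (0:ℝ) < α - 1 := by linarith
  have hd0 : (0:ℝ) < (d:ℝ) := by positivity
  have hdsub : d - 1 + 1 = d := Nat.sub_add_cancel (by omega)
  set C : ℝ := 4 * π / d * ((γ - 1) / γ) with hC
  have hCpos : 0 < C := by
    apply mul_pos (by positivity) (div_pos hγ0 hγpos)
  set K : ℝ := 2 * π / d * ((2 - γ) / γ) with hK
  have hKpos : 0 < K := by
    apply mul_pos (by positivity) (div_pos (by linarith) hγpos)
  have hcoef : (α - 1) * C = 2 * K := by
    rw [hα, hC, hK]
    field_simp
    ring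
  have hwcont : ContinuousOn w (Ico 0 R) := fun r hr => (hderiv r hr).continuousWithinAt
  -- Step 1: pointwise differential inequality
  have hstep1 : ∀ r ∈ Ioo 0 R, w' r ≤ -C * w r ^ α * r := by
    intro r hr
    obtain ⟨hr0, hrR⟩ := hr
    have hsub : Icc 0 r ⊆ Ico 0 R := fun y hy => ⟨hy.1, lt_of_le_of_lt hy.2 hrR⟩
    have hcont : ContinuousOn (fun y => y ^ (d - 1) * w y ^ α) (Icc 0 r) := by
      apply ContinuousOn.mul (continuousOn_pow _)
      exact ((hwcont.mono hsub).rpow_const fun y hy => Or.inl (ne_of_gt (hpos y (hsub hy))))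
    have hint1 : IntervalIntegrable (fun y => y ^ (d - 1) * w y ^ α) MeasureTheory.volume 0 r := by
      apply ContinuousOn.intervalIntegrable
      rwa [uIcc_of_le hr0.le]
    have hint2 : IntervalIntegrable (fun y => y ^ (d - 1) * w r ^ α) MeasureTheory.volume 0 r :=
      (((continuous_pow (d-1)).mul continuous_const).intervalIntegrable 0 r)
    have hle : ∀ y ∈ Icc 0 r, y ^ (d - 1) * w r ^ α ≤ y ^ (d - 1) * w y ^ α := by
      intro y hy
      have hwy : 0 < w y := hpos y (hsub hy)
      have hwr : w r ≤ w y := hmono (hsub hy) ⟨hr0.le, hrR⟩ hy.2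
      have : w r ^ α ≤ w y ^ α :=
        Real.rpow_le_rpow (le_of_lt (hpos r ⟨hr0.le, hrR⟩)) hwr hα0.le
      exact mul_le_mul_of_nonneg_left this (pow_nonneg hy.1 _)
    have hIle : (∫ y in (0:ℝ)..r, y ^ (d - 1) * w r ^ α)
        ≤ ∫ y in (0:ℝ)..r, y ^ (d - 1) * w y ^ α :=
      intervalIntegral.integral_mono_on hr0.le hint2 hint1 hle
    have hIcalc : (∫ y in (0:ℝ)..r, y ^ (d - 1) * w r ^ α) = r ^ d / d * w r ^ α := by
      rw [integral_mul_const, integral_pow]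
      have hc : ((d - 1 : ℕ) : ℝ) + 1 = d := by exact_mod_cast hdsub
      rw [hdsub, hc, zero_pow (by omega : d ≠ 0)]
      ring
    have hwr := heq r ⟨hr0, hrR⟩
    have hmulneg : -(4 * π) * ((γ - 1) / γ) * r ^ (-((d : ℝ) - 1)) ≤ 0 := by
      have h1 : (0:ℝ) < r ^ (-((d : ℝ) - 1)) := Real.rpow_pos_of_pos hr0 _
      have h2 : (0:ℝ) ≤ 4 * π * ((γ - 1) / γ) := by positivity
      nlinarith [mul_nonneg h2 h1.le]
    have key : w' r ≤ -(4 * π) * ((γ - 1) / γ) * r ^ (-((d : ℝ) - 1)) * (r ^ d / d * w r ^ α) := by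
      rw [hwr, ← hIcalc]
      exact mul_le_mul_of_nonpos_left hIle hmulneg
    have hrpow : r ^ (-((d : ℝ) - 1)) * r ^ d = r := by
      rw [← Real.rpow_natCast r d, ← Real.rpow_add hr0]
      norm_num
    calc w' r ≤ -(4 * π) * ((γ - 1) / γ) * r ^ (-((d : ℝ) - 1)) * (r ^ d / d * w r ^ α) := key
      _ = -C * w r ^ α * r := by
          rw [hC]
          linear_combination (-(4 * π) * ((γ - 1) / γ) / d * w r ^ α) * hrpow
  -- Step 2: monotonicity of auxiliary function
  set F : ℝ → ℝ := fun r => w r ^ (-(α - 1)) - K * r ^ 2 with hF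
  have hFd : ∀ x ∈ Ioo 0 R, HasDerivAt F
      (w' x * (-(α - 1)) * w x ^ (-(α - 1) - 1) - K * (2 * x)) x := by
    intro x hx
    have hxI : x ∈ Ico 0 R := ⟨hx.1.le, hx.2⟩
    have hw : HasDerivAt w (w' x) x :=
      (hderiv x hxI).hasDerivAt (Ico_mem_nhds hx.1 hx.2)
    have h1 : HasDerivAt (fun r => w r ^ (-(α - 1)))
        (w' x * (-(α - 1)) * w x ^ (-(α - 1) - 1)) x :=
      hw.rpow_const (Or.inl (ne_of_gt (hpos x hxI)))
    have h2 : HasDerivAt (fun r : ℝ => K * r ^ 2) (K * (2 * x)) x := by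
      simpa using (hasDerivAt_pow 2 x).const_mul K
    exact h1.sub h2
  have hFmono : MonotoneOn F (Ico 0 R) := by
    apply monotoneOn_of_deriv_nonneg (convex_Ico 0 R)
    · apply ContinuousOn.sub
      · exact hwcont.rpow_const fun r hr => Or.inl (ne_of_gt (hpos r hr))
      · exact (continuous_const.mul (continuous_pow 2)).continuousOn
    · rw [interior_Ico]
      intro x hx
      exact (hFd x hx).differentiableAt.differentiableWithinAt
    · rw [interior_Ico]
      intro x hx
      rw [(hFd x hx).deriv]
      have hxI : x ∈ Ico 0 R := ⟨hx.1.le, hx.2⟩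
      have hwx : 0 < w x := hpos x hxI
      have hwp : 0 < w x ^ (-(α - 1) - 1) := Real.rpow_pos_of_pos hwx _
      have h1 : w' x ≤ -C * w x ^ α * x := hstep1 x hx
      have h2 : w' x * (-(α - 1)) ≥ (-C * w x ^ α * x) * (-(α - 1)) := by nlinarith
      have h3 : w' x * (-(α - 1)) * w x ^ (-(α - 1) - 1)
          ≥ (-C * w x ^ α * x) * (-(α - 1)) * w x ^ (-(α - 1) - 1) :=
        mul_le_mul_of_nonneg_right h2 hwp.le
      have h4 : w x ^ α * w x ^ (-(α - 1) - 1) = 1 := by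
        rw [← Real.rpow_add hwx]
        norm_num
      have h5 : (-C * w x ^ α * x) * (-(α - 1)) * w x ^ (-(α - 1) - 1)
          = (α - 1) * C * x := by
        have : (-C * w x ^ α * x) * (-(α - 1)) * w x ^ (-(α - 1) - 1)
            = (α - 1) * C * x * (w x ^ α * w x ^ (-(α - 1) - 1)) := by ring
        rw [this, h4, mul_one]
      rw [h5, hcoef] at h3
      nlinarith [hx.1]
  -- Conclusion
  intro r hr
  have h0mem : (0:ℝ) ∈ Ico (0:ℝ) R := ⟨le_refl 0, hR⟩
  have hFle : F 0 ≤ F r := hFmono h0mem hr hr.1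
  have hF0 : F 0 = w₀ ^ (-(α - 1)) := by simp [hF, hw₀]
  have hkey : w₀ ^ (-(α - 1)) + K * r ^ 2 ≤ w r ^ (-(α - 1)) := by
    have := hFle
    rw [hF0] at this
    simp only [hF] at this
    linarith
  have hApos : 0 < w₀ ^ (-(α - 1)) + K * r ^ 2 := by
    have : 0 < w₀ ^ (-(α - 1)) := Real.rpow_pos_of_pos hw₀pos _
    nlinarith [sq_nonneg r]
  have hz : -(1 / (α - 1)) ≤ 0 := by
    have : 0 < 1 / (α - 1) := by positivity
    linarith
  have hmain := Real.rpow_le_rpow_of_nonpos hApos hkey hz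
  have hwr : 0 < w r := hpos r hr
  have hEq : (w r ^ (-(α - 1))) ^ (-(1 / (α - 1))) = w r := by
    rw [← Real.rpow_mul hwr.le]
    have : -(α - 1) * -(1 / (α - 1)) = 1 := by field_simp
    rw [this, Real.rpow_one]
  rw [hEq] at hmain
  exact hmain
end

section
/- (Decay estimate, isothermal case γ = 1) Let d ≥ 3, and suppose h : [0,R) → ℝ is C^1, decreasing, with h(0) = h₀, and satisfies h'(r) = −4π·r^{−(d−1)} ∫_0^r y^{d−1} e^{h(y)} dy for r ∈ (0,R). Then for all r ∈ [0,R): h(r) ≤ −ln(e^{−h₀} + (2π/d)·r²). -/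
open Real Set intervalIntegral

theorem decay_estimate_isothermal
    (d : ℕ) (hd : 3 ≤ d) (R : ℝ) (hR : 0 < R)
    (h h' : ℝ → ℝ) (h₀ : ℝ) (hh₀ : h 0 = h₀)
    (hmono : AntitoneOn h (Ico 0 R))
    (hderiv : ∀ r ∈ Ico 0 R, HasDerivWithinAt h (h' r) (Ico 0 R) r)
    (heq : ∀ r ∈ Ioo 0 R,
      h' r = -(4 * π) * r ^ (-((d : ℝ) - 1)) *
        ∫ y in (0:ℝ)..r, y ^ (d - 1) * Real.exp (h y)) :
    ∀ r ∈ Ico 0 R,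
      h r ≤ -Real.log (Real.exp (-h₀) + (2 * π / d) * r ^ 2) := by
  have hd0 : (0:ℝ) < d := by
    have : 0 < d := by omega
    exact_mod_cast this
  have hcont : ContinuousOn h (Ico 0 R) := fun x hx =>
    (hderiv x hx).continuousWithinAt
  -- key derivative bound
  have hkey : ∀ x ∈ Ioo (0:ℝ) R, h' x ≤ -(4 * π / d) * Real.exp (h x) * x := by
    intro x hx
    have hx0 : 0 < x := hx.1
    have hxR : x < R := hx.2
    have hxI : x ∈ Ico (0:ℝ) R := ⟨hx0.le, hxR⟩
    -- integral lower bound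
    have hsub : Icc (0:ℝ) x ⊆ Ico 0 R := fun y hy => ⟨hy.1, lt_of_le_of_lt hy.2 hxR⟩
    have hint1 : IntervalIntegrable (fun y => y ^ (d - 1) * Real.exp (h y)) MeasureTheory.volume 0 x := by
      apply ContinuousOn.intervalIntegrable
      rw [uIcc_of_le hx0.le]
      exact (continuousOn_pow _).mul ((hcont.mono hsub).rexp)
    have hint2 : IntervalIntegrable (fun y => y ^ (d - 1) * Real.exp (h x)) MeasureTheory.volume 0 x := by
      apply ContinuousOn.intervalIntegrable
      exact ((continuousOn_pow _).mul continuousOn_const)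
    have hIge : Real.exp (h x) * x ^ d / d ≤
        ∫ y in (0:ℝ)..x, y ^ (d - 1) * Real.exp (h y) := by
      have hcomp : ∫ y in (0:ℝ)..x, y ^ (d - 1) * Real.exp (h x) ≤
          ∫ y in (0:ℝ)..x, y ^ (d - 1) * Real.exp (h y) := by
        apply intervalIntegral.integral_mono_on hx0.le hint2 hint1
        intro y hy
        have hyI : y ∈ Ico (0:ℝ) R := hsub hy
        have := hmono hyI hxI hy.2
        exact mul_le_mul_of_nonneg_left (Real.exp_le_exp.2 this) (pow_nonneg hy.1 _)
      have hcalc : ∫ y in (0:ℝ)..x, y ^ (d - 1) * Real.exp (h x)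
          = Real.exp (h x) * x ^ d / d := by
        rw [intervalIntegral.integral_mul_const, integral_pow]
        have hdd : d - 1 + 1 = d := by omega
        rw [hdd]
        have hc : ((d - 1 : ℕ) : ℝ) + 1 = d := by
          have h1 : 1 ≤ d := by omega
          push_cast [h1]
          ring
        rw [hc, zero_pow (by omega : d ≠ 0)]
        ring
      linarith [hcomp, hcalc.symm.le]
    rw [heq x hx]
    have hrpow : (0:ℝ) < x ^ (-((d:ℝ) - 1)) := Real.rpow_pos_of_pos hx0 _
    have hmul : -(4 * π) * x ^ (-((d:ℝ) - 1)) *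
        (∫ y in (0:ℝ)..x, y ^ (d - 1) * Real.exp (h y)) ≤
        -(4 * π) * x ^ (-((d:ℝ) - 1)) * (Real.exp (h x) * x ^ d / d) := by
      have hc : -(4 * π) * x ^ (-((d:ℝ) - 1)) ≤ 0 := by
        have : (0:ℝ) < π := Real.pi_pos
        nlinarith
      exact mul_le_mul_of_nonpos_left hIge hc
    refine hmul.trans_eq ?_
    have hxd : x ^ (-((d:ℝ) - 1)) * x ^ d = x := by
      rw [← Real.rpow_natCast x d, ← Real.rpow_add hx0]
      norm_num
    calc -(4 * π) * x ^ (-((d:ℝ) - 1)) * (Real.exp (h x) * x ^ d / d)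
        = -(4 * π) * (x ^ (-((d:ℝ) - 1)) * x ^ d) * Real.exp (h x) / d := by ring
      _ = -(4 * π / d) * Real.exp (h x) * x := by rw [hxd]; ring
  -- monotone function F
  set F : ℝ → ℝ := fun r => Real.exp (-(h r)) - (2 * π / d) * r ^ 2 with hF
  have hFmono : MonotoneOn F (Ico 0 R) := by
    apply monotoneOn_of_hasDerivWithinAt_nonneg (convex_Ico 0 R)
      (f' := fun x => -h' x * Real.exp (-(h x)) - (2 * π / d) * (2 * x))
    · exact ((hcont.neg.rexp).sub ((continuousOn_const).mul (continuousOn_pow 2)))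
    · intro x hx
      rw [interior_Ico] at hx
      have hxI : x ∈ Ico (0:ℝ) R := ⟨hx.1.le, hx.2⟩
      have hmem : Ico (0:ℝ) R ∈ nhds x := Ico_mem_nhds hx.1 hx.2
      have hd1 : HasDerivAt h (h' x) x := (hderiv x hxI).hasDerivAt hmem
      have hd2 : HasDerivAt (fun r => Real.exp (-(h r)))
          (Real.exp (-(h x)) * (-(h' x))) x := hd1.neg.exp
      have hd3 : HasDerivAt (fun r => (2 * π / d) * r ^ 2)
          ((2 * π / d) * (2 * x)) x := by
        have := (hasDerivAt_pow 2 x).const_mul (2 * π / d)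
        simpa using this
      have := (hd2.sub hd3)
      have heqd : Real.exp (-(h x)) * (-(h' x)) - (2 * π / d) * (2 * x)
          = -h' x * Real.exp (-(h x)) - (2 * π / d) * (2 * x) := by ring
      rw [heqd] at this
      exact this.hasDerivWithinAt.mono (by rw [interior_Ico])
    · intro x hx
      rw [interior_Ico] at hx
      have hb := hkey x hx
      have hx0 : 0 < x := hx.1
      have hexp : Real.exp (h x) * Real.exp (-(h x)) = 1 := by
        rw [← Real.exp_add]; simp
      have hE : 0 < Real.exp (-(h x)) := Real.exp_pos _
      have h2 : (4 * π / d) * Real.exp (h x) * x * Real.exp (-(h x)) = (4 * π / d) * x := by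
        have h3 : (4 * π / d) * Real.exp (h x) * x * Real.exp (-(h x))
            = (4 * π / d) * x * (Real.exp (h x) * Real.exp (-(h x))) := by ring
        rw [h3, hexp, mul_one]
      have h1 : (4 * π / d) * x ≤ -h' x * Real.exp (-(h x)) := by
        have := mul_le_mul_of_nonneg_right (neg_le_neg hb) hE.le
        linarith
      have h4 : 2 * π / d * (2 * x) = 4 * π / d * x := by ring
      linarith
  intro r hr
  have h0I : (0:ℝ) ∈ Ico (0:ℝ) R := ⟨le_refl 0, hR⟩
  have hFle : F 0 ≤ F r := hFmono h0I hr hr.1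
  have hF0 : F 0 = Real.exp (-h₀) := by simp [hF, hh₀]
  have hmain : Real.exp (-h₀) + (2 * π / d) * r ^ 2 ≤ Real.exp (-(h r)) := by
    have : Real.exp (-h₀) ≤ Real.exp (-(h r)) - (2 * π / d) * r ^ 2 := by
      rw [← hF0]; exact hFle
    linarith
  have hApos : 0 < Real.exp (-h₀) + (2 * π / d) * r ^ 2 := by
    have : 0 ≤ (2 * π / d) * r ^ 2 := by positivity
    have := Real.exp_pos (-h₀)
    linarith
  have := Real.log_le_log hApos hmain
  rw [Real.log_exp] at this
  linarith
end

section
/- (Pohozaev integral, case γ > 1) Let d ≥ 3, γ > 1, α = 1/(γ−1), and suppose w ∈ C²((0,R)) ∩ C¹([0,R)) is positive and satisfies w'' + (d−1)r^{−1}w' = −4π((γ−1)/γ)w^α on (0,R), with w, w' bounded near 0 and w'(0) = 0. Then for all r ∈ (0,R): 2π((γ−1)/γ)(2d/(1+α) − (d−2)) ∫_0^r w(y)^{α+1} y^{d−1} dy = (1/2)w'(r)²r^d + 4π((γ−1)/γ)² w(r)^{α+1} r^d + (1/2)(d−2)w'(r)w(r)r^{d−1}. -/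
open Real Set intervalIntegral

/-!
For a radial solution of `w'' + (d - 1) r⁻¹ w' = -λ g(w)` with `G' = g`, the functional
`Φ(r) = ½ w'(r)² rᵈ + λ G(w(r)) rᵈ + ½ (d - 2) w'(r) w(r) rᵈ⁻¹` combines the two multipliers
`rᵈ w'` and `rᵈ⁻¹ w`: by the equation its derivative is `λ (d G(w) - ½ (d - 2) w g(w)) rᵈ⁻¹`,
the `w'² rᵈ⁻¹` terms cancelling. As `Φ(0) = 0`, integrating from `0` gives the identity; for the
Lane–Emden nonlinearity `g(w) = wᵅ`, `G(w) = wᵅ⁺¹ / (α + 1)`, and `(γ - 1) / γ = 1 / (α + 1)`.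
-/

/-- `F` plays the role of `λ G ∘ w`. -/
noncomputable def pohozaevFunctional (d : ℕ) (F w w' : ℝ → ℝ) (r : ℝ) : ℝ :=
  1 / 2 * w' r ^ 2 * r ^ d + F r * r ^ d + 1 / 2 * ((d : ℝ) - 2) * w' r * w r * r ^ (d - 1)

theorem hasDerivAt_pohozaevFunctional {d : ℕ} (hd : d ≠ 0) {F w w' w'' : ℝ → ℝ} {f x : ℝ}
    (hx : x ≠ 0) (hw : HasDerivAt w (w' x) x) (hw' : HasDerivAt w' (w'' x) x)
    (hF : HasDerivAt F (f * w' x) x)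
    (heq : w'' x + ((d : ℝ) - 1) * x⁻¹ * w' x = -f) :
    HasDerivAt (pohozaevFunctional d F w w')
      ((d * F x - ((d : ℝ) - 2) / 2 * f * w x) * x ^ (d - 1)) x := by
  obtain ⟨n, rfl⟩ := Nat.exists_eq_add_one_of_ne_zero hd
  have hpow : (n : ℝ) * x ^ (n - 1) * x = n * x ^ n := by
    rcases n with _ | n
    · simp
    · rw [Nat.add_sub_cancel, mul_assoc, ← pow_succ]
  have H := (((hw'.pow 2).mul (hasDerivAt_pow (n + 1) x)).const_mul (1 / 2 : ℝ)).add
    (hF.mul (hasDerivAt_pow (n + 1) x)) |>.add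
    (((hw'.mul hw).mul (hasDerivAt_pow n x)).const_mul (1 / 2 * (((n + 1 : ℕ) : ℝ) - 2)))
  refine (H.congr_deriv ?_).congr_of_eventuallyEq (.of_forall fun r => ?_)
  · simp only [Nat.add_sub_cancel, Nat.cast_add_one, Pi.pow_apply, Pi.mul_apply] at heq ⊢
    have hw'' : w'' x = -f - n * x⁻¹ * w' x := by linear_combination heq
    rw [hw'']
    linear_combination
      (-n * w' x ^ 2 * x ^ n - 1 / 2 * (n - 1) * n * w' x * w x * x ^ (n - 1)) *
        mul_inv_cancel₀ hx + (1 / 2 * (n - 1) * x⁻¹ * w' x * w x) * hpow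
  · simp only [pohozaevFunctional, Nat.add_sub_cancel, Pi.add_apply, Pi.mul_apply, Pi.pow_apply]
    ring

theorem pohozaevFunctional_eq_integral {d : ℕ} (hd : 2 ≤ d) {F f w w' w'' : ℝ → ℝ} {r : ℝ}
    (hr : 0 ≤ r) (hwc : ContinuousOn w (Icc 0 r)) (hw'c : ContinuousOn w' (Icc 0 r))
    (hFc : ContinuousOn F (Icc 0 r)) (hfc : ContinuousOn f (Icc 0 r))
    (hw : ∀ x ∈ Ioo 0 r, HasDerivAt w (w' x) x) (hw' : ∀ x ∈ Ioo 0 r, HasDerivAt w' (w'' x) x)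
    (hF : ∀ x ∈ Ioo 0 r, HasDerivAt F (f x * w' x) x)
    (heq : ∀ x ∈ Ioo 0 r, w'' x + ((d : ℝ) - 1) * x⁻¹ * w' x = -f x) :
    pohozaevFunctional d F w w' r =
      ∫ x in 0..r, (d * F x - ((d : ℝ) - 2) / 2 * f x * w x) * x ^ (d - 1) := by
  have h0 : pohozaevFunctional d F w w' 0 = 0 := by
    simp [pohozaevFunctional, zero_pow (by omega : d ≠ 0), zero_pow (by omega : d - 1 ≠ 0)]
  rw [integral_eq_sub_of_hasDerivAt_of_le hr (by unfold pohozaevFunctional; fun_prop)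
    (fun x hx => hasDerivAt_pohozaevFunctional (by omega) hx.1.ne' (hw x hx) (hw' x hx) (hF x hx)
      (heq x hx)) ?_, h0, sub_zero]
  refine ContinuousOn.intervalIntegrable ?_
  rw [uIcc_of_le hr]
  fun_prop

theorem pohozaevFunctional_laneEmden {d : ℕ} (hd : 2 ≤ d) {α κ r : ℝ} (hα : α + 1 ≠ 0)
    {w w' w'' : ℝ → ℝ} (hr : 0 ≤ r) (hpos : ∀ x ∈ Icc 0 r, 0 < w x)
    (hwc : ContinuousOn w (Icc 0 r)) (hw'c : ContinuousOn w' (Icc 0 r))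
    (hw : ∀ x ∈ Ioo 0 r, HasDerivAt w (w' x) x) (hw' : ∀ x ∈ Ioo 0 r, HasDerivAt w' (w'' x) x)
    (heq : ∀ x ∈ Ioo 0 r, w'' x + ((d : ℝ) - 1) * x⁻¹ * w' x = -(κ * w x ^ α)) :
    pohozaevFunctional d (fun x => κ / (α + 1) * w x ^ (α + 1)) w w' r =
      κ / 2 * (2 * d / (α + 1) - ((d : ℝ) - 2)) * ∫ x in 0..r, w x ^ (α + 1) * x ^ (d - 1) := by
  have hrpow : ContinuousOn (fun x => w x ^ (α + 1)) (Icc 0 r) :=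
    hwc.rpow_const fun x hx => .inl (hpos x hx).ne'
  rw [pohozaevFunctional_eq_integral (F := fun x => κ / (α + 1) * w x ^ (α + 1))
    (f := fun x => κ * w x ^ α) hd hr hwc hw'c (continuousOn_const.mul hrpow)
    (continuousOn_const.mul (hwc.rpow_const fun x hx => .inl (hpos x hx).ne')) hw hw' ?_ heq,
    ← integral_const_mul]
  · refine integral_congr fun x hx => ?_
    rw [uIcc_of_le hr] at hx
    rw [rpow_add_one (hpos x hx).ne']
    field_simp
  · intro x hx
    have h := (hw x hx).rpow_const (p := α + 1) (.inl (hpos x ⟨hx.1.le, hx.2.le⟩).ne')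
    rw [add_sub_cancel_right] at h
    refine (h.const_mul (κ / (α + 1))).congr_deriv ?_
    field_simp

theorem pohozaev_polytropic_general
    (d : ℕ) (hd : 3 ≤ d) (γ : ℝ) (hγ : 1 < γ) (α : ℝ) (hα : α = 1 / (γ - 1))
    (R : ℝ)
    (w w' w'' : ℝ → ℝ)
    (hpos : ∀ r ∈ Ico 0 R, 0 < w r)
    (hC1 : ∀ r ∈ Ico 0 R, HasDerivWithinAt w (w' r) (Ico 0 R) r)
    (hC1' : ContinuousOn w' (Ico 0 R))
    (hC2 : ∀ r ∈ Ioo 0 R, HasDerivAt w' (w'' r) r)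
    (heq : ∀ r ∈ Ioo 0 R,
      w'' r + ((d : ℝ) - 1) * r⁻¹ * w' r = -(4 * π) * ((γ - 1) / γ) * w r ^ α) :
    ∀ r ∈ Ioo 0 R,
      2 * π * ((γ - 1) / γ) * (2 * d / (1 + α) - ((d : ℝ) - 2)) *
          (∫ y in (0:ℝ)..r, w y ^ (α + 1) * y ^ (d - 1)) =
        (1 / 2) * w' r ^ 2 * r ^ d + 4 * π * ((γ - 1) / γ) ^ 2 * w r ^ (α + 1) * r ^ d +
          (1 / 2) * ((d : ℝ) - 2) * w' r * w r * r ^ (d - 1) := by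
  rintro r ⟨hr, hrR⟩
  have hsub : Icc 0 r ⊆ Ico 0 R := Icc_subset_Ico_right hrR
  have hα1 : α + 1 ≠ 0 := by
    have : 0 < α := hα ▸ one_div_pos.mpr (sub_pos.mpr hγ)
    linarith
  have hc : (γ - 1) / γ = 1 / (α + 1) := by
    have : γ - 1 ≠ 0 := by linarith
    rw [hα, div_add_one this, one_div_div, add_sub_cancel]
  have hIoo : Ioo 0 r ⊆ Ioo 0 R := Ioo_subset_Ioo_right hrR.le
  have hwc : ContinuousOn w (Icc 0 r) := fun x hx => (hC1 x (hsub hx)).continuousWithinAt.mono hsub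
  have hw : ∀ x ∈ Ioo 0 r, HasDerivAt w (w' x) x := fun x hx =>
    (hC1 x (hsub (Ioo_subset_Icc_self hx))).hasDerivAt (Ico_mem_nhds hx.1 (hx.2.trans hrR))
  have key := pohozaevFunctional_laneEmden (d := d) (κ := 4 * π * ((γ - 1) / γ)) (by omega)
    hα1 hr.le (fun x hx => hpos x (hsub hx)) hwc (hC1'.mono hsub) hw
    (fun x hx => hC2 x (hIoo hx)) (fun x hx => by rw [heq x (hIoo hx)]; ring)
  rw [pohozaevFunctional] at key
  rw [hc] at key ⊢
  linear_combination -key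

theorem pohozaev_polytropic
    (d : ℕ) (hd : 3 ≤ d) (γ : ℝ) (hγ : 1 < γ) (α : ℝ) (hα : α = 1 / (γ - 1))
    (R : ℝ) (hR : 0 < R)
    (w w' w'' : ℝ → ℝ)
    (hpos : ∀ r ∈ Ico 0 R, 0 < w r)
    (hC1 : ∀ r ∈ Ico 0 R, HasDerivWithinAt w (w' r) (Ico 0 R) r)
    (hC1' : ContinuousOn w' (Ico 0 R))
    (hC2 : ∀ r ∈ Ioo 0 R, HasDerivAt w' (w'' r) r)
    (heq : ∀ r ∈ Ioo 0 R,
      w'' r + ((d : ℝ) - 1) * r⁻¹ * w' r = -(4 * π) * ((γ - 1) / γ) * w r ^ α)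
    (hwbdd : ∃ M ε, 0 < ε ∧ ∀ r ∈ Ioo 0 ε, |w r| ≤ M ∧ |w' r| ≤ M)
    (hw'0 : w' 0 = 0) :
    ∀ r ∈ Ioo 0 R,
      2 * π * ((γ - 1) / γ) * (2 * d / (1 + α) - ((d : ℝ) - 2)) *
          (∫ y in (0:ℝ)..r, w y ^ (α + 1) * y ^ (d - 1)) =
        (1 / 2) * w' r ^ 2 * r ^ d + 4 * π * ((γ - 1) / γ) ^ 2 * w r ^ (α + 1) * r ^ d +
          (1 / 2) * ((d : ℝ) - 2) * w' r * w r * r ^ (d - 1) :=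
  pohozaev_polytropic_general d hd γ hγ α hα R w w' w'' hpos hC1 hC1' hC2 heq
end

section
/- (Stability of the nontrivial fixed point) Let d ≥ 3 and 1 ≤ γ < 2d/(d+2). With F and v* as in the Lane–Emden dynamical system, the Jacobian ∇F(v*) equals the matrix with rows (2/(2−γ) − 2, −(1/(2π))·(−dγ + 2(d−1))/(2−γ)²) and (4π, −(d − 2/(2−γ))), and both eigenvalues of ∇F(v*) have strictly negative real part; explicitly the eigenvalues are λ = 2/(2−γ) − 1 − d/2 ± (1/2)√((d−2)² − 8(−dγ + 2(d−1))/(2−γ)²). -/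
/-!
Writing `v*₁ = A^{1/(2-γ)}`, one has `(v*₁)^{2-γ} = A` and `(v*₁)^{1-γ} v*₂ = 2γ/(2-γ)`, which turns
the Jacobian of `F` at `v*` into the stated matrix `J`. Its trace `4/(2-γ) - 2 - d` is negative
since `γ(d+2) < 2d`, so its determinant `2d - 4/(2-γ) = (d - 2) - trace` is positive. For a real
`2 × 2` matrix with negative trace and positive determinant, the eigenvalues `(tr ± s)/2`,
`s² = tr² - 4 det`, have negative real part: either `s` is imaginary, or `s` is real with
`s² < tr²`.
-/

open Real ContinuousLinearMap

theorem Complex.abs_re_lt_of_sq_eq_ofReal {s : ℂ} {D c : ℝ} (hs : s ^ 2 = D) (hc : 0 < c)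
    (hD : D < c ^ 2) : |s.re| < c := by
  have hre : s.re ^ 2 - s.im ^ 2 = D := by
    simpa [sq, Complex.mul_re] using congrArg Complex.re hs
  have him : s.re * s.im = 0 := by
    have h := congrArg Complex.im hs
    simp only [sq, Complex.mul_im, Complex.ofReal_im] at h
    linarith
  refine abs_lt_of_sq_lt_sq ?_ hc.le
  rcases mul_eq_zero.1 him with h | h
  · rw [h]; nlinarith
  · rw [h] at hre; linarith

section TwoByTwo

variable {a b c e : ℝ} {z : ℂ}

theorem sub_mul_sub_sub_mul_eq_zero_of_sq_eq
    (hz : (2 * z - (a + e)) ^ 2 = ((a - e) ^ 2 + 4 * b * c : ℝ)) :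
    ((a : ℂ) - z) * ((e : ℂ) - z) - (b : ℂ) * (c : ℂ) = 0 := by
  push_cast at hz
  linear_combination hz / 4

theorem re_neg_of_sq_eq_of_trace_neg_of_det_pos (htr : a + e < 0) (hdet : 0 < a * e - b * c)
    (hz : (2 * z - (a + e)) ^ 2 = ((a - e) ^ 2 + 4 * b * c : ℝ)) : z.re < 0 := by
  have hs := Complex.abs_re_lt_of_sq_eq_ofReal hz (c := -(a + e)) (by linarith) (by nlinarith)
  have hre : (2 * z - (a + e)).re = 2 * z.re - (a + e) := by simp
  rw [hre] at hs
  linarith [le_abs_self (2 * z.re - (a + e))]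

end TwoByTwo

theorem hasFDerivAt_laneEmden {a b c e p : ℝ} {v : ℝ × ℝ} (hv : v.1 ≠ 0) :
    HasFDerivAt (fun v : ℝ × ℝ => (a * v.1 ^ p * v.2 + b * v.1, c * v.1 - e * v.2))
      (((a * (p * v.1 ^ (p - 1)) * v.2 + b) • fst ℝ ℝ ℝ + (a * v.1 ^ p) • snd ℝ ℝ ℝ).prod
        (c • fst ℝ ℝ ℝ + (-e) • snd ℝ ℝ ℝ)) v := by
  have hpow : HasFDerivAt (fun v : ℝ × ℝ => v.1 ^ p) ((p * v.1 ^ (p - 1)) • fst ℝ ℝ ℝ) v :=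
    hasFDerivAt_fst.rpow_const (Or.inl hv)
  refine ((((hpow.const_mul a).mul hasFDerivAt_snd).add (hasFDerivAt_fst.const_mul b)).prodMk
    ((hasFDerivAt_fst.const_mul c).sub (hasFDerivAt_snd.const_mul e))).congr_fderiv ?_
  ext <;> simp; ring

theorem hasFDerivAt_laneEmden_fixedPoint {γ A : ℝ} {c e : ℝ} (hγ : γ ≠ 0) (hγ2 : 2 - γ ≠ 0)
    (hA : 0 < A) :
    HasFDerivAt
      (fun v : ℝ × ℝ => (-(1 / γ) * v.1 ^ (2 - γ) * v.2 + (2 / (2 - γ)) * v.1, c * v.1 - e * v.2))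
      (((2 / (2 - γ) - 2) • fst ℝ ℝ ℝ + (-(1 / γ) * A) • snd ℝ ℝ ℝ).prod
        (c • fst ℝ ℝ ℝ + (-e) • snd ℝ ℝ ℝ))
      (A ^ (1 / (2 - γ)), 2 * γ / (2 - γ) * (A ^ (1 / (2 - γ))) ^ (γ - 1)) := by
  have hpow : (A ^ (1 / (2 - γ))) ^ (2 - γ) = A := by rw [one_div, rpow_inv_rpow hA.le hγ2]
  set v₁ := A ^ (1 / (2 - γ))
  have hv₁ : 0 < v₁ := rpow_pos_of_pos hA _
  have hcancel : v₁ ^ (2 - γ - 1) * v₁ ^ (γ - 1) = 1 := by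
    rw [← rpow_add hv₁]; ring_nf; exact rpow_zero _
  have hentry : -(1 / γ) * ((2 - γ) * v₁ ^ (2 - γ - 1)) * (2 * γ / (2 - γ) * v₁ ^ (γ - 1))
      + 2 / (2 - γ) = 2 / (2 - γ) - 2 := by
    field_simp
    linear_combination (γ - 2) * hcancel
  have h := hasFDerivAt_laneEmden (a := -(1 / γ)) (b := 2 / (2 - γ)) (c := c) (e := e)
    (p := 2 - γ) (v := (v₁, 2 * γ / (2 - γ) * v₁ ^ (γ - 1))) hv₁.ne'
  rwa [hentry, hpow] at h

theorem laneEmden_exponent_bounds {d γ : ℝ} (hd : 0 ≤ d) (hγ1 : 1 ≤ γ)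
    (hγ2 : γ < 2 * d / (d + 2)) :
    2 < d ∧ γ < 2 ∧ 0 < -d * γ + 2 * (d - 1) ∧ 4 / (2 - γ) < d + 2 := by
  have hγd : γ * (d + 2) < 2 * d := (lt_div_iff₀ (by linarith)).1 hγ2
  have hd2 : 2 < d := by nlinarith
  have hγ2 : γ < 2 := by nlinarith
  refine ⟨hd2, hγ2, by nlinarith, ?_⟩
  rw [div_lt_iff₀ (by linarith)]
  nlinarith

theorem lane_emden_fixed_point_stable_general
    (d : ℕ) (γ : ℝ) (hγ1 : 1 ≤ γ) (hγ2 : γ < 2 * d / ((d : ℝ) + 2))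
    (F : ℝ × ℝ → ℝ × ℝ)
    (hF : F = fun v =>
      (-(1 / γ) * v.1 ^ (2 - γ) * v.2 + (2 / (2 - γ)) * v.1,
        4 * π * v.1 - ((d : ℝ) - 2 / (2 - γ)) * v.2))
    (vstar : ℝ × ℝ)
    (hvstar : vstar =
      (((1 / (2 * π)) * (-(d : ℝ) * γ ^ 2 + 2 * ((d : ℝ) - 1) * γ) / (2 - γ) ^ 2)
          ^ (1 / (2 - γ)),
        (2 * γ / (2 - γ)) *
          (((1 / (2 * π)) * (-(d : ℝ) * γ ^ 2 + 2 * ((d : ℝ) - 1) * γ) / (2 - γ) ^ 2)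
              ^ (1 / (2 - γ))) ^ (γ - 1)))
    (J00 J01 J10 J11 : ℝ)
    (hJ00 : J00 = 2 / (2 - γ) - 2)
    (hJ01 : J01 = -(1 / (2 * π)) * (-(d : ℝ) * γ + 2 * ((d : ℝ) - 1)) / (2 - γ) ^ 2)
    (hJ10 : J10 = 4 * π)
    (hJ11 : J11 = -((d : ℝ) - 2 / (2 - γ)))
    (Δ : ℂ)
    (hΔ : Δ = ((((d : ℝ) - 2) ^ 2 -
        8 * (-(d : ℝ) * γ + 2 * ((d : ℝ) - 1)) / (2 - γ) ^ 2 : ℝ) : ℂ))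
    (lamP lamM : ℂ)
    (hlamP : lamP = ((2 / (2 - γ) - 1 - (d : ℝ) / 2 : ℝ) : ℂ) + (1 / 2) * Δ ^ ((1 : ℂ) / 2))
    (hlamM : lamM = ((2 / (2 - γ) - 1 - (d : ℝ) / 2 : ℝ) : ℂ) - (1 / 2) * Δ ^ ((1 : ℂ) / 2)) :
    HasFDerivAt F
      (((J00 • ContinuousLinearMap.fst ℝ ℝ ℝ + J01 • ContinuousLinearMap.snd ℝ ℝ ℝ).prod
        (J10 • ContinuousLinearMap.fst ℝ ℝ ℝ + J11 • ContinuousLinearMap.snd ℝ ℝ ℝ))) vstar ∧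
    (∀ lam : ℂ, lam = lamP ∨ lam = lamM →
      ((J00 : ℂ) - lam) * ((J11 : ℂ) - lam) - (J01 : ℂ) * (J10 : ℂ) = 0 ∧ lam.re < 0) := by
  obtain ⟨hd2, hγlt2, hK, htrace⟩ := laneEmden_exponent_bounds (Nat.cast_nonneg d) hγ1 hγ2
  have h2γ : 2 - γ ≠ 0 := by linarith
  have htr : J00 + J11 = 2 * (2 / (2 - γ) - 1 - d / 2) := by rw [hJ00, hJ11]; ring
  have hdet : J00 * J11 - J01 * J10 = 2 * d - 4 / (2 - γ) := by
    rw [hJ00, hJ01, hJ10, hJ11]; field_simp; ring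
  have hdisc : Δ = ((J00 - J11) ^ 2 + 4 * J01 * J10 : ℝ) := by
    rw [hΔ, hJ00, hJ01, hJ10, hJ11]; congr 1; field_simp; ring
  refine ⟨?_, fun lam hlam => ?_⟩
  · have hJ01' : J01 = -(1 / γ) * ((1 / (2 * π)) * (-(d : ℝ) * γ ^ 2 + 2 * ((d : ℝ) - 1) * γ)
        / (2 - γ) ^ 2) := by rw [hJ01]; field_simp
    subst hF hvstar
    rw [hJ00, hJ01', hJ10, hJ11]
    exact hasFDerivAt_laneEmden_fixedPoint (by linarith) h2γ
      (div_pos (mul_pos (by positivity) (by nlinarith)) (by positivity))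
  have hroot : 2 * lam - (J00 + J11) = Δ ^ ((1 : ℂ) / 2) ∨
      2 * lam - (J00 + J11) = -Δ ^ ((1 : ℂ) / 2) := by
    have htrC : (J00 : ℂ) + J11 = 2 * ((2 / (2 - γ) - 1 - d / 2 : ℝ) : ℂ) := by
      exact_mod_cast htr
    rcases hlam with rfl | rfl
    · left; rw [hlamP, htrC]; ring
    · right; rw [hlamM, htrC]; ring
  have hz : (2 * lam - (J00 + J11)) ^ 2 = ((J00 - J11) ^ 2 + 4 * J01 * J10 : ℝ) := by
    rw [← hdisc, ← Complex.cpow_ofNat_inv_pow Δ 2, ← one_div]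
    rcases hroot with h | h
    · rw [h]
    · rw [h, neg_sq]
  exact ⟨sub_mul_sub_sub_mul_eq_zero_of_sq_eq hz, re_neg_of_sq_eq_of_trace_neg_of_det_pos
    (by rw [htr]; linarith [show 4 / (2 - γ) = 2 * (2 / (2 - γ)) by ring]) (by linarith) hz⟩

theorem lane_emden_fixed_point_stable
    (d : ℕ) (hd : 3 ≤ d) (γ : ℝ) (hγ1 : 1 ≤ γ) (hγ2 : γ < 2 * d / ((d : ℝ) + 2))
    (F : ℝ × ℝ → ℝ × ℝ)
    (hF : F = fun v =>
      (-(1 / γ) * v.1 ^ (2 - γ) * v.2 + (2 / (2 - γ)) * v.1,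
        4 * π * v.1 - ((d : ℝ) - 2 / (2 - γ)) * v.2))
    (vstar : ℝ × ℝ)
    (hvstar : vstar =
      (((1 / (2 * π)) * (-(d : ℝ) * γ ^ 2 + 2 * ((d : ℝ) - 1) * γ) / (2 - γ) ^ 2)
          ^ (1 / (2 - γ)),
        (2 * γ / (2 - γ)) *
          (((1 / (2 * π)) * (-(d : ℝ) * γ ^ 2 + 2 * ((d : ℝ) - 1) * γ) / (2 - γ) ^ 2)
              ^ (1 / (2 - γ))) ^ (γ - 1)))
    (J00 J01 J10 J11 : ℝ)
    (hJ00 : J00 = 2 / (2 - γ) - 2)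
    (hJ01 : J01 = -(1 / (2 * π)) * (-(d : ℝ) * γ + 2 * ((d : ℝ) - 1)) / (2 - γ) ^ 2)
    (hJ10 : J10 = 4 * π)
    (hJ11 : J11 = -((d : ℝ) - 2 / (2 - γ)))
    (Δ : ℂ)
    (hΔ : Δ = ((((d : ℝ) - 2) ^ 2 -
        8 * (-(d : ℝ) * γ + 2 * ((d : ℝ) - 1)) / (2 - γ) ^ 2 : ℝ) : ℂ))
    (lamP lamM : ℂ)
    (hlamP : lamP = ((2 / (2 - γ) - 1 - (d : ℝ) / 2 : ℝ) : ℂ) + (1 / 2) * Δ ^ ((1 : ℂ) / 2))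
    (hlamM : lamM = ((2 / (2 - γ) - 1 - (d : ℝ) / 2 : ℝ) : ℂ) - (1 / 2) * Δ ^ ((1 : ℂ) / 2)) :
    HasFDerivAt F
      (((J00 • ContinuousLinearMap.fst ℝ ℝ ℝ + J01 • ContinuousLinearMap.snd ℝ ℝ ℝ).prod
        (J10 • ContinuousLinearMap.fst ℝ ℝ ℝ + J11 • ContinuousLinearMap.snd ℝ ℝ ℝ))) vstar ∧
    (∀ lam : ℂ, lam = lamP ∨ lam = lamM →
      ((J00 : ℂ) - lam) * ((J11 : ℂ) - lam) - (J01 : ℂ) * (J10 : ℂ) = 0 ∧ lam.re < 0) :=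
  lane_emden_fixed_point_stable_general d γ hγ1 hγ2 F hF vstar hvstar J00 J01 J10 J11 hJ00 hJ01 hJ10
    hJ11 Δ hΔ lamP lamM hlamP hlamM
end

section
/- (Dulac criterion for the Lane–Emden system) Let d ≥ 3 and 1 ≤ γ < 2d/(d+2). With F(v₁,v₂) = (−(1/γ)v₁^{2−γ}v₂ + (2/(2−γ))v₁, 4πv₁ − (d − 2/(2−γ))v₂), on the open quadrant (0,∞) × (0,∞) we have div(v₁^{−(2−γ)}·F(v)) = −(d − 2γ/(2−γ))·v₁^{−(2−γ)} < 0, using that d > 2γ/(2−γ) is equivalent to γ < 2d/(d+2). -/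
open Real Set

theorem lane_emden_dulac
    (d : ℕ) (hd : 3 ≤ d) (γ : ℝ) (hγ1 : 1 ≤ γ) (hγ2 : γ < 2 * d / ((d : ℝ) + 2))
    (F₁ F₂ : ℝ → ℝ → ℝ)
    (hF₁ : F₁ = fun v₁ v₂ => -(1 / γ) * v₁ ^ (2 - γ) * v₂ + (2 / (2 - γ)) * v₁)
    (hF₂ : F₂ = fun v₁ v₂ => 4 * π * v₁ - ((d : ℝ) - 2 / (2 - γ)) * v₂) :
    (2 * γ / (2 - γ) < (d : ℝ)) ∧
    ∀ v₁ v₂ : ℝ, 0 < v₁ → 0 < v₂ →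
      ∃ D₁ D₂ : ℝ,
        HasDerivAt (fun x : ℝ => x ^ (-(2 - γ)) * F₁ x v₂) D₁ v₁ ∧
        HasDerivAt (fun y : ℝ => v₁ ^ (-(2 - γ)) * F₂ v₁ y) D₂ v₂ ∧
        D₁ + D₂ = -((d : ℝ) - 2 * γ / (2 - γ)) * v₁ ^ (-(2 - γ)) ∧
        D₁ + D₂ < 0 := by
  have hdR : (3 : ℝ) ≤ (d : ℝ) := by exact_mod_cast hd
  have hd2 : (0 : ℝ) < (d : ℝ) + 2 := by linarith
  have hγd : γ * ((d : ℝ) + 2) < 2 * d := by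
    have := (lt_div_iff₀ hd2).mp hγ2; linarith
  have hγlt2 : γ < 2 := by nlinarith
  have h2γ : (0 : ℝ) < 2 - γ := by linarith
  have hγ0 : (0 : ℝ) < γ := by linarith
  have hmain : 2 * γ / (2 - γ) < (d : ℝ) := by
    rw [div_lt_iff₀ h2γ]; nlinarith
  refine ⟨hmain, fun v₁ v₂ hv₁ hv₂ => ?_⟩
  subst hF₁ hF₂
  -- derivative in the first variable
  have hrp1 : HasDerivAt (fun x : ℝ => x ^ (-(2 - γ)))
      ((-(2 - γ)) * v₁ ^ (-(2 - γ) - 1)) v₁ :=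
    Real.hasDerivAt_rpow_const (Or.inl hv₁.ne')
  have hrp2 : HasDerivAt (fun x : ℝ => x ^ (2 - γ))
      ((2 - γ) * v₁ ^ (2 - γ - 1)) v₁ :=
    Real.hasDerivAt_rpow_const (Or.inl hv₁.ne')
  have hg : HasDerivAt (fun x : ℝ => -(1 / γ) * x ^ (2 - γ) * v₂ + (2 / (2 - γ)) * x)
      (-(1 / γ) * ((2 - γ) * v₁ ^ (2 - γ - 1)) * v₂ + (2 / (2 - γ)) * 1) v₁ :=
    (((hrp2.const_mul (-(1 / γ))).mul_const v₂)).add ((hasDerivAt_id v₁).const_mul (2 / (2 - γ)))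
  have hD1 := hrp1.mul hg
  have hD2 : HasDerivAt (fun y : ℝ => v₁ ^ (-(2 - γ)) * (4 * π * v₁ - ((d : ℝ) - 2 / (2 - γ)) * y))
      (v₁ ^ (-(2 - γ)) * (0 - ((d : ℝ) - 2 / (2 - γ)) * 1)) v₂ :=
    (((hasDerivAt_const v₂ (4 * π * v₁)).sub ((hasDerivAt_id v₂).const_mul _))).const_mul _
  refine ⟨_, _, hD1, hD2, ?_, ?_⟩
  · -- algebraic identity
    have ha : (0 : ℝ) < v₁ ^ (-(2 - γ)) := Real.rpow_pos_of_pos hv₁ _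
    have e1 : v₁ ^ (-(2 - γ) - 1) = v₁ ^ (-(2 - γ)) / v₁ := Real.rpow_sub_one hv₁.ne' _
    have e2 : v₁ ^ (2 - γ - 1) = v₁ ^ (2 - γ) / v₁ := Real.rpow_sub_one hv₁.ne' _
    rw [e1, e2]
    field_simp
    ring
  · have ha : (0 : ℝ) < v₁ ^ (-(2 - γ)) := Real.rpow_pos_of_pos hv₁ _
    have e1 : v₁ ^ (-(2 - γ) - 1) = v₁ ^ (-(2 - γ)) / v₁ := Real.rpow_sub_one hv₁.ne' _
    have e2 : v₁ ^ (2 - γ - 1) = v₁ ^ (2 - γ) / v₁ := Real.rpow_sub_one hv₁.ne' _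
    have key : (-(2 - γ)) * v₁ ^ (-(2 - γ) - 1) *
        (-(1 / γ) * v₁ ^ (2 - γ) * v₂ + (2 / (2 - γ)) * v₁) +
        v₁ ^ (-(2 - γ)) * (-(1 / γ) * ((2 - γ) * v₁ ^ (2 - γ - 1)) * v₂ + (2 / (2 - γ)) * 1) +
        v₁ ^ (-(2 - γ)) * (0 - ((d : ℝ) - 2 / (2 - γ)) * 1)
        = -((d : ℝ) - 2 * γ / (2 - γ)) * v₁ ^ (-(2 - γ)) := by
      rw [e1, e2]; field_simp; ring
    rw [key]
    have hpos : 0 < ((d : ℝ) - 2 * γ / (2 - γ)) := by linarith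
    nlinarith [Real.rpow_pos_of_pos hv₁ (-(2 - γ))]
end
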